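/- Let k be a number field and S a finite set of places. Let 1 → H → G → T → 1 be a short exact sequence of k-groups of multiplicative type with G a quasi-trivial torus, and let 0 → T̂ → Ĝ → Ĥ → 0 be the dual exact sequence of Galois modules. Then the connecting homomorphism ∂ : H¹(k, Ĥ) → H²(k, T̂) restricts to an isomorphism Sha¹_S(k, Ĥ) ≅ Sha²_S(k, T̂). -/

import Mathlib

/-!
A diagram chase. Since `∂` commutes with localization and every local `∂` is injective, a class
of `H¹(k, Ĥ)` is locally trivial at `v` exactly when its image under `∂` is; together with the
injectivity of the global `∂` this gives injectivity on `Sha¹_S`. Conversely, a class of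
`Sha²_S(k, T̂)` maps into `Sha²_S(k, Ĝ) = 0`, so by exactness it lies in the image of `∂`, and its
preimage lies in `Sha¹_S(k, Ĥ)` by the first remark.
-/

section Sha

variable {ι A B : Type*} [AddCommGroup A] [AddCommGroup B]
  {LA LB : ι → Type*} [∀ v, AddCommGroup (LA v)] [∀ v, AddCommGroup (LB v)]

def sha (S : Set ι) (loc : ∀ v, A →+ LA v) : Set A :=
  {a | ∀ v ∉ S, loc v a = 0}

variable {S : Set ι} {locA : ∀ v, A →+ LA v} {locB : ∀ v, B →+ LB v}
  {f : A →+ B} {g : ∀ v, LA v →+ LB v}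

theorem mapsTo_sha (hcomm : ∀ v a, g v (locA v a) = locB v (f a)) :
    Set.MapsTo f (sha S locA) (sha S locB) := by
  intro a ha v hv
  rw [← hcomm, ha v hv, map_zero]

theorem mem_sha_of_map_mem_sha (hg : ∀ v, Function.Injective (g v))
    (hcomm : ∀ v a, g v (locA v a) = locB v (f a)) {a : A} (ha : f a ∈ sha S locB) :
    a ∈ sha S locA := by
  intro v hv
  apply hg v
  rw [hcomm, ha v hv, map_zero]

end Sha

theorem statement13
    (Place : Type) (S : Finset Place)
    -- global cohomology groups
    (H1kD H2kT H2kG : Type)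
    [AddCommGroup H1kD] [AddCommGroup H2kT] [AddCommGroup H2kG]
    -- local cohomology groups
    (H1vD H2vT H2vG : Place → Type)
    [∀ v, AddCommGroup (H1vD v)] [∀ v, AddCommGroup (H2vT v)]
    [∀ v, AddCommGroup (H2vG v)]
    -- localization maps
    (locD : ∀ v, H1kD →+ H1vD v) (locT : ∀ v, H2kT →+ H2vT v)
    (locG : ∀ v, H2kG →+ H2vG v)
    -- the maps of the long exact sequence of `0 → T̂ → Ĝ → Ĥ → 0`
    (dk : H1kD →+ H2kT) (ik : H2kT →+ H2kG)
    (dv : ∀ v, H1vD v →+ H2vT v) (iv : ∀ v, H2vT v →+ H2vG v)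
    (hdcomm : ∀ (v) (f : H1kD), dv v (locD v f) = locT v (dk f))
    (hicomm : ∀ (v) (x : H2kT), iv v (locT v x) = locG v (ik x))
    -- exactness `0 → H¹(k,Ĥ) → H²(k,T̂) → H²(k,Ĝ)` (using `H¹(k,Ĝ) = 0`)
    (hdk_inj : Function.Injective dk)
    (hexact : ∀ x : H2kT, ik x = 0 ↔ ∃ f : H1kD, dk f = x)
    -- local injectivity of `∂` (using `H¹(k_v,Ĝ) = 0`)
    (hdv_inj : ∀ v, Function.Injective (dv v))
    -- `Sha²_S(k,Ĝ) = 0` for the quasi-trivial torus `G`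
    (hShaG : ∀ x : H2kG, (∀ v ∉ S, locG v x = 0) → x = 0) :
    -- `∂` restricts to a bijection `Sha¹_S(k,Ĥ) ≅ Sha²_S(k,T̂)`
    Set.BijOn dk {f : H1kD | ∀ v ∉ S, locD v f = 0}
      {x : H2kT | ∀ v ∉ S, locT v x = 0} := by
  refine ⟨mapsTo_sha (S := (S : Set Place)) hdcomm, hdk_inj.injOn, fun x hx => ?_⟩
  have hik : ik x = 0 := hShaG _ (mapsTo_sha (S := (S : Set Place)) hicomm hx)
  obtain ⟨f, rfl⟩ := (hexact x).mp hik
  exact ⟨f, mem_sha_of_map_mem_sha (S := (S : Set Place)) hdv_inj hdcomm hx, rfl⟩
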